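/- If g : ℝ → ℝ is continuous and there exist R > 0 and constants c₊, c₋ with g(x) = c₊ for x ≥ R and g(x) = c₋ for x ≤ -R, then for every ε > 0 there is h ∈ 𝒳 with sup_{x ∈ ℝ} |g(x) - h(x)| < ε. -/
import Mathlib

noncomputable def ReLU (t : ℝ) : ℝ := max t 0

noncomputable def Xspan : Submodule ℝ (ℝ → ℝ) :=
  Submodule.span ℝ {f | ∃ a b : ℝ, a ≠ 0 ∧ f = fun x => ReLU (a * x + b)}

lemma relu_mem (a b : ℝ) (ha : a ≠ 0) : (fun x => ReLU (a * x + b)) ∈ Xspan :=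
  Submodule.subset_span ⟨a, b, ha, rfl⟩

lemma hinge_mem (t : ℝ) : (fun x => ReLU (x - t)) ∈ Xspan := by
  have := relu_mem 1 (-t) one_ne_zero
  simpa [sub_eq_add_neg] using this

lemma relu_of_nonneg {t : ℝ} (h : 0 ≤ t) : ReLU t = t := max_eq_left h
lemma relu_of_nonpos {t : ℝ} (h : t ≤ 0) : ReLU t = 0 := max_eq_right h

lemma linear_mem (b : ℝ) : (fun x : ℝ => x + b) ∈ Xspan := by
  have h1 := relu_mem 1 b one_ne_zero
  have h2 := relu_mem (-1) (-b) (by norm_num)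
  have h := Xspan.sub_mem h1 h2
  have heq : ((fun x => ReLU (1 * x + b)) - fun x => ReLU (-1 * x + -b)) = (fun x : ℝ => x + b) := by
    funext x
    simp only [Pi.sub_apply, one_mul, neg_mul]
    rcases le_total (x + b) 0 with h' | h'
    · rw [relu_of_nonpos h', relu_of_nonneg (by linarith)]; ring
    · rw [relu_of_nonneg h', relu_of_nonpos (by linarith)]; ring
  rwa [heq] at h

lemma const_mem (c : ℝ) : (fun _ : ℝ => c) ∈ Xspan := by
  have h1 := linear_mem 1
  have h0 := linear_mem 0
  have h := Xspan.smul_mem c (Xspan.sub_mem h1 h0)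
  have heq : (c • ((fun x : ℝ => x + 1) - fun x : ℝ => x + 0)) = (fun _ : ℝ => c) := by
    funext x; simp
  rwa [heq] at h

theorem eventually_constant_approx (g : ℝ → ℝ) (hg : Continuous g)
    (R : ℝ) (hR : 0 < R) (cP cM : ℝ)
    (hplus : ∀ x : ℝ, R ≤ x → g x = cP)
    (hminus : ∀ x : ℝ, x ≤ -R → g x = cM)
    (ε : ℝ) (hε : 0 < ε) :
    ∃ h ∈ Xspan, ∀ x : ℝ, |g x - h x| < ε := by
  -- uniform continuity on the compact interval
  have hu : UniformContinuousOn g (Set.Icc (-R) R) :=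
    (isCompact_Icc).uniformContinuousOn_of_continuous hg.continuousOn
  rw [Metric.uniformContinuousOn_iff] at hu
  obtain ⟨d, hd, hmod⟩ := hu (ε / 3) (by positivity)
  -- choose number of subintervals
  set N : ℕ := ⌈(2 * R) / d⌉₊ + 1 with hNdef
  have hNpos : 0 < (N : ℝ) := by positivity
  have hNne : (N : ℝ) ≠ 0 := ne_of_gt hNpos
  have hNd : 2 * R / d < (N : ℝ) := by
    have h1 : (2 * R) / d ≤ (⌈(2 * R) / d⌉₊ : ℝ) := Nat.le_ceil _
    have h2 : ((⌈(2 * R) / d⌉₊ : ℝ)) < (N : ℝ) := by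
      rw [hNdef]; push_cast; linarith
    linarith
  set δ : ℝ := 2 * R / N with hδdef
  have hδpos : 0 < δ := by positivity
  have hδd : δ < d := by
    rw [hδdef, div_lt_iff₀ hNpos]
    rw [div_lt_iff₀ hd] at hNd
    linarith
  set node : ℕ → ℝ := fun i => -R + i * δ with hnode
  have node_zero : node 0 = -R := by simp [hnode]
  have node_N : node N = R := by
    simp only [hnode, hδdef]
    field_simp
    ring
  have node_succ : ∀ i : ℕ, node (i + 1) = node i + δ := by
    intro i; simp only [hnode]; push_cast; ring
  have node_mono : ∀ i j : ℕ, i ≤ j → node i ≤ node j := by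
    intro i j hij
    simp only [hnode]
    have : (i : ℝ) ≤ (j : ℝ) := by exact_mod_cast hij
    nlinarith
  have node_mem : ∀ i : ℕ, i ≤ N → node i ∈ Set.Icc (-R) R := by
    intro i hi
    constructor
    · rw [← node_zero]; exact node_mono 0 i (Nat.zero_le _)
    · rw [← node_N]; exact node_mono i N hi
  set coeff : ℕ → ℝ := fun i => (g (node (i + 1)) - g (node i)) / δ with hcoeff
  -- the approximant
  set h : ℝ → ℝ := (fun _ => cM) + ∑ i ∈ Finset.range N,
      coeff i • ((fun x => ReLU (x - node i)) - fun x => ReLU (x - node (i + 1))) with hh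
  have hmem : h ∈ Xspan := by
    apply Xspan.add_mem (const_mem cM)
    apply Submodule.sum_mem
    intro i _
    exact Xspan.smul_mem _ (Xspan.sub_mem (hinge_mem _) (hinge_mem _))
  have hval : ∀ x : ℝ, h x = cM + ∑ i ∈ Finset.range N,
      coeff i * (ReLU (x - node i) - ReLU (x - node (i + 1))) := by
    intro x
    simp [hh, Finset.sum_apply, Pi.add_apply, Pi.smul_apply, Pi.sub_apply, smul_eq_mul]
  refine ⟨h, hmem, fun x => ?_⟩
  -- full term value when x ≥ node (i+1)
  have term_full : ∀ i : ℕ, node (i + 1) ≤ x →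
      coeff i * (ReLU (x - node i) - ReLU (x - node (i + 1))) = g (node (i + 1)) - g (node i) := by
    intro i hi
    have h1 : node i ≤ x := le_trans (node_mono i (i + 1) (Nat.le_succ _)) hi
    rw [relu_of_nonneg (by linarith), relu_of_nonneg (by linarith), hcoeff]
    have : x - node i - (x - node (i + 1)) = δ := by rw [node_succ]; ring
    rw [this]
    field_simp
  rcases le_or_gt x (-R) with hx | hx
  · -- x ≤ -R : h x = cM = g x
    have : h x = cM := by
      rw [hval]
      have : ∑ i ∈ Finset.range N,
          coeff i * (ReLU (x - node i) - ReLU (x - node (i + 1))) = 0 := by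
        apply Finset.sum_eq_zero
        intro i _
        have h1 : x ≤ node i := le_trans hx (by rw [← node_zero]; exact node_mono 0 i (Nat.zero_le _))
        have h2 : x ≤ node (i + 1) := le_trans h1 (node_mono i (i + 1) (Nat.le_succ _))
        rw [relu_of_nonpos (by linarith), relu_of_nonpos (by linarith)]
        ring
      rw [this]; ring
    rw [this, hminus x hx]
    simpa using hε
  rcases le_or_gt R x with hx' | hx'
  · -- x ≥ R : h x = cP = g x
    have : h x = cP := by
      rw [hval]
      have hsum : ∑ i ∈ Finset.range N,
          coeff i * (ReLU (x - node i) - ReLU (x - node (i + 1))) =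
          ∑ i ∈ Finset.range N, (g (node (i + 1)) - g (node i)) := by
        apply Finset.sum_congr rfl
        intro i hi
        apply term_full
        have : node (i + 1) ≤ node N := node_mono _ _ (Finset.mem_range.mp hi)
        rw [node_N] at this; linarith
      rw [hsum, Finset.sum_range_sub (fun i => g (node i)), node_zero, node_N,
        hplus R le_rfl, hminus (-R) le_rfl]
      ring
    rw [this, hplus x hx']
    simpa using hε
  · -- -R < x < R : interpolation interval
    set k : ℕ := ⌊(x + R) / δ⌋₊ with hk
    have hxR : 0 ≤ (x + R) / δ := div_nonneg (by linarith) hδpos.le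
    have hk1 : (k : ℝ) ≤ (x + R) / δ := Nat.floor_le hxR
    have hk2 : (x + R) / δ < k + 1 := Nat.lt_floor_add_one _
    have hnk : node k ≤ x := by
      simp only [hnode]
      rw [le_div_iff₀ hδpos] at hk1
      linarith
    have hnk1 : x ≤ node (k + 1) := by
      simp only [hnode]
      rw [div_lt_iff₀ hδpos] at hk2
      push_cast
      nlinarith
    have hkN : k < N := by
      have h2R : (x + R) / δ < (N : ℝ) := by
        rw [div_lt_iff₀ hδpos, hδdef]
        field_simp
        linarith
      have : (k : ℝ) < (N : ℝ) := lt_of_le_of_lt hk1 h2R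
      exact_mod_cast this
    -- compute h x
    have hnkIcc : node k ∈ Set.Icc (-R) R := node_mem k (le_of_lt hkN)
    have hnk1Icc : node (k + 1) ∈ Set.Icc (-R) R := node_mem (k + 1) hkN
    have hxIcc : x ∈ Set.Icc (-R) R := ⟨le_of_lt hx, le_of_lt hx'⟩
    have hhx : h x = g (node k) + coeff k * (x - node k) := by
      rw [hval]
      have hsplit := Finset.sum_range_add_sum_Ico
        (fun i => coeff i * (ReLU (x - node i) - ReLU (x - node (i + 1)))) (Nat.succ_le_of_lt hkN)
      rw [← hsplit]
      have hzero : ∑ i ∈ Finset.Ico (k + 1) N,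
          coeff i * (ReLU (x - node i) - ReLU (x - node (i + 1))) = 0 := by
        apply Finset.sum_eq_zero
        intro i hi
        have : k + 1 ≤ i := (Finset.mem_Ico.mp hi).1
        have h1 : x ≤ node i := le_trans hnk1 (node_mono _ _ this)
        have h2 : x ≤ node (i + 1) := le_trans h1 (node_mono i (i + 1) (Nat.le_succ _))
        rw [relu_of_nonpos (by linarith), relu_of_nonpos (by linarith)]
        ring
      rw [hzero, Finset.sum_range_succ]
      have hfull : ∑ i ∈ Finset.range k,
          coeff i * (ReLU (x - node i) - ReLU (x - node (i + 1))) =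
          g (node k) - g (node 0) := by
        rw [← Finset.sum_range_sub (fun i => g (node i))]
        apply Finset.sum_congr rfl
        intro i hi
        apply term_full
        exact le_trans (node_mono (i + 1) k (Finset.mem_range.mp hi)) hnk
      have hterm : coeff k * (ReLU (x - node k) - ReLU (x - node (k + 1))) =
          coeff k * (x - node k) := by
        rw [relu_of_nonneg (by linarith), relu_of_nonpos (by linarith)]
        ring
      rw [hfull, hterm, node_zero, hminus (-R) le_rfl]
      ring
    -- bound
    have hmod1 : |g x - g (node k)| < ε / 3 := by
      have := hmod x hxIcc (node k) hnkIcc (by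
        rw [Real.dist_eq]
        have : x - node k ≤ δ := by
          have := node_succ k
          linarith
        rw [abs_of_nonneg (by linarith)]
        linarith)
      rwa [Real.dist_eq] at this
    have hmod2 : |g (node (k + 1)) - g (node k)| < ε / 3 := by
      have := hmod (node (k + 1)) hnk1Icc (node k) hnkIcc (by
        rw [Real.dist_eq, node_succ]
        rw [abs_of_nonneg (by linarith)]
        linarith)
      rwa [Real.dist_eq] at this
    have hcb : |coeff k * (x - node k)| ≤ |g (node (k + 1)) - g (node k)| := by
      rw [hcoeff, abs_mul, abs_div, abs_of_pos hδpos]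
      rw [div_mul_eq_mul_div, div_le_iff₀ hδpos]
      have h1 : |x - node k| ≤ δ := by
        rw [abs_of_nonneg (by linarith)]
        have := node_succ k
        linarith
      have h2 : 0 ≤ |g (node (k + 1)) - g (node k)| := abs_nonneg _
      nlinarith
    calc |g x - h x| = |(g x - g (node k)) - coeff k * (x - node k)| := by rw [hhx]; ring_nf
      _ ≤ |g x - g (node k)| + |coeff k * (x - node k)| := abs_sub _ _
      _ < ε := by
          have := hcb.trans_lt hmod2
          linarith
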